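/- arXiv:2208.05430 — 4 statements merged into one kernel-verified Lean document; each statement's English description precedes it below -/
import Mathlib

section
/- For all vectors a, b in ℝ^n and integer n ≥ 2, |b−a|^n − |a|^n ≥ (1/λ_n)|b|^n − n|a|^{n−2} a·b, where λ_n := 2^{n−1} − 1. -/
open EuclideanSpace

section Aux

variable {E : Type*} [NormedAddCommGroup E] [InnerProductSpace ℝ E]

private lemma vi_add_rpow_le_rpow_add {x y : ℝ} (hx : 0 ≤ x) (hy : 0 ≤ y) {p : ℝ}
    (hp : 1 ≤ p) : x ^ p + y ^ p ≤ (x + y) ^ p := by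
  have := NNReal.add_rpow_le_rpow_add (⟨x, hx⟩) (⟨y, hy⟩) hp
  have h2 : ((⟨x, hx⟩ : NNReal) : ℝ) ^ p + ((⟨y, hy⟩ : NNReal) : ℝ) ^ p
      ≤ (((⟨x, hx⟩ : NNReal) : ℝ) + ((⟨y, hy⟩ : NNReal) : ℝ)) ^ p := by
    exact_mod_cast this
  simpa using h2

private lemma vi_rpow_add_le {x y : ℝ} (hx : 0 ≤ x) (hy : 0 ≤ y) {p : ℝ}
    (hp : 1 ≤ p) : (x + y) ^ p ≤ (2:ℝ) ^ (p - 1) * (x ^ p + y ^ p) := by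
  have := NNReal.rpow_add_le_mul_rpow_add_rpow (⟨x, hx⟩) (⟨y, hy⟩) hp
  have h2 : (((⟨x, hx⟩ : NNReal) : ℝ) + ((⟨y, hy⟩ : NNReal) : ℝ)) ^ p
      ≤ ((2:ℝ) ^ (p-1)) * (((⟨x, hx⟩ : NNReal) : ℝ) ^ p + ((⟨y, hy⟩ : NNReal) : ℝ) ^ p) := by
    exact_mod_cast this
  simpa using h2

/-- scalar Bernoulli-type inequality -/
private lemma vi_scalar {s t : ℝ} (hs : 0 < s) (ht : 0 ≤ t) {n : ℕ} (hn : 2 ≤ n) :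
    s ^ n + n * s ^ (n-2) * (s * t - s ^ 2) ≤ t ^ n := by
  have hb := one_add_mul_le_pow (a := t / s - 1) (by
    have : 0 ≤ t / s := div_nonneg ht hs.le
    linarith) n
  have h1 : (1 + (t / s - 1)) = t / s := by ring
  rw [h1] at hb
  have hsn : (0:ℝ) < s ^ n := pow_pos hs n
  have hb' : (1 + (n:ℝ) * (t / s - 1)) * s ^ n ≤ (t / s) ^ n * s ^ n :=
    mul_le_mul_of_nonneg_right hb hsn.le
  have h2 : (t / s) ^ n * s ^ n = t ^ n := by
    rw [div_pow, div_mul_cancel₀]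
    exact pow_ne_zero _ hs.ne'
  have h3 : s ^ (n-1) = s ^ (n-2) * s := by rw [← pow_succ]; congr 1; omega
  have h4 : s ^ n = s ^ (n-2) * s ^ 2 := by rw [← pow_add]; congr 1; omega
  have h5 : (t / s) * s ^ n = t * s ^ (n-1) := by
    rw [h3, h4]; field_simp
  calc s ^ n + n * s ^ (n-2) * (s * t - s ^ 2)
      = (1 + (n:ℝ) * (t / s - 1)) * s ^ n := by
        rw [h4] at *
        have : (1 + (n:ℝ) * (t / s - 1)) * (s ^ (n-2) * s ^ 2)
            = s ^ (n-2) * s ^ 2 + (n:ℝ) * ((t/s) * (s ^ (n-2) * s ^ 2)) - n * (s ^ (n-2) * s ^ 2) := by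
          ring
        rw [this]
        have h6 : (t/s) * (s ^ (n-2) * s ^ 2) = t * s * s ^ (n-2) := by
          field_simp
        rw [h6]; ring
    _ ≤ t ^ n := by rw [← h2]; exact hb'

/-- gradient (convexity) inequality -/
private lemma vi_grad {n : ℕ} (hn : 2 ≤ n) (a y : E) :
    ‖a‖ ^ n + n * ‖a‖ ^ (n-2) * ((inner ℝ a y : ℝ) - ‖a‖ ^ 2) ≤ ‖y‖ ^ n := by
  by_cases ha : a = 0
  · subst ha
    simp only [inner_zero_left, norm_zero, sub_zero]
    have : (0:ℝ) ^ n = 0 := zero_pow (by omega)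
    rw [this]
    simp
  · have hs : 0 < ‖a‖ := norm_pos_iff.mpr ha
    have hcs : (inner ℝ a y : ℝ) ≤ ‖a‖ * ‖y‖ := real_inner_le_norm a y
    have hmain := vi_scalar hs (norm_nonneg y) hn
    have hc : n * ‖a‖ ^ (n-2) * ((inner ℝ a y : ℝ) - ‖a‖ ^ 2)
        ≤ n * ‖a‖ ^ (n-2) * (‖a‖ * ‖y‖ - ‖a‖ ^ 2) := by
      apply mul_le_mul_of_nonneg_left (by linarith)
      positivity
    linarith

/-- Clarkson-type inequality in Hilbert space -/
private lemma vi_clarkson {n : ℕ} (hn : 2 ≤ n) (a b : E) :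
    ‖a + b‖ ^ n + ‖a - b‖ ^ n ≤ 2 ^ (n-1) * (‖a‖ ^ n + ‖b‖ ^ n) := by
  set q : ℝ := (n:ℝ) / 2 with hq
  have hq1 : 1 ≤ q := by
    rw [hq]
    have : (2:ℝ) ≤ (n:ℝ) := by exact_mod_cast hn
    linarith
  have key : ∀ x : E, ‖x‖ ^ n = (‖x‖ ^ 2) ^ q := by
    intro x
    have h2 : ((2:ℕ):ℝ) * q = (n:ℝ) := by rw [hq]; push_cast; ring
    rw [← Real.rpow_natCast ‖x‖ 2, ← Real.rpow_mul (norm_nonneg x), h2,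
      Real.rpow_natCast]
  have hpar : ‖a + b‖ ^ 2 + ‖a - b‖ ^ 2 = 2 * (‖a‖ ^ 2 + ‖b‖ ^ 2) := by
    exact parallelogram_law_with_norm ℝ a b
  have hpow : (2:ℝ) ^ q * (2:ℝ) ^ (q - 1) = 2 ^ (n - 1) := by
    rw [← Real.rpow_add (by norm_num : (0:ℝ) < 2)]
    have h1 : q + (q - 1) = ((n - 1 : ℕ) : ℝ) := by
      have : ((n - 1 : ℕ) : ℝ) = (n:ℝ) - 1 := by
        push_cast [Nat.cast_sub (by omega : 1 ≤ n)]; ring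
      rw [this, hq]; ring
    rw [h1, Real.rpow_natCast]
  calc ‖a + b‖ ^ n + ‖a - b‖ ^ n
      = (‖a + b‖ ^ 2) ^ q + (‖a - b‖ ^ 2) ^ q := by rw [key, key]
    _ ≤ (‖a + b‖ ^ 2 + ‖a - b‖ ^ 2) ^ q :=
        vi_add_rpow_le_rpow_add (by positivity) (by positivity) hq1
    _ = ((2:ℝ)) ^ q * (‖a‖ ^ 2 + ‖b‖ ^ 2) ^ q := by
        rw [hpar, Real.mul_rpow (by norm_num) (by positivity)]
    _ ≤ (2:ℝ) ^ q * ((2:ℝ) ^ (q - 1) * ((‖a‖ ^ 2) ^ q + (‖b‖ ^ 2) ^ q)) := by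
        apply mul_le_mul_of_nonneg_left
          (vi_rpow_add_le (by positivity) (by positivity) hq1)
        positivity
    _ = 2 ^ (n - 1) * (‖a‖ ^ n + ‖b‖ ^ n) := by
        rw [key a, key b, ← hpow]; ring

/-- Bregman-type difference for the n-th power of the norm -/
private noncomputable def viD (n : ℕ) (a b : E) : ℝ :=
  ‖b‖ ^ n - ‖a‖ ^ n - n * ‖a‖ ^ (n-2) * ((inner ℝ a b : ℝ) - ‖a‖ ^ 2)

private lemma vi_step {n : ℕ} (hn : 2 ≤ n) (a b : E) :
    2 * viD n a ((2⁻¹:ℝ) • (a + b)) + ‖b - a‖ ^ n / 2 ^ (n-1) ≤ viD n a b := by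
  have hP : (0:ℝ) < 2 ^ (n-1) := by positivity
  have h2n : (2:ℝ) ^ n = 2 * 2 ^ (n-1) := by
    rw [← pow_succ']; congr 1; omega
  have hip : (inner ℝ a ((2⁻¹:ℝ) • (a + b)) : ℝ) = 2⁻¹ * (‖a‖ ^ 2 + (inner ℝ a b : ℝ)) := by
    rw [real_inner_smul_right, inner_add_right, real_inner_self_eq_norm_sq]
  have hnm : ‖(2⁻¹:ℝ) • (a + b)‖ ^ n = ‖a + b‖ ^ n / (2 * 2 ^ (n-1)) := by
    rw [norm_smul]
    simp only [norm_inv, Real.norm_ofNat, mul_pow, inv_pow]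
    rw [← h2n]
    ring
  have hcl := vi_clarkson hn a b
  have hrev : ‖a - b‖ = ‖b - a‖ := norm_sub_rev a b
  rw [hrev] at hcl
  simp only [viD, hip, hnm]
  have expand : 2 * (‖a + b‖ ^ n / (2 * 2 ^ (n-1)) - ‖a‖ ^ n
        - ↑n * ‖a‖ ^ (n-2) * (2⁻¹ * (‖a‖ ^ 2 + (inner ℝ a b : ℝ)) - ‖a‖ ^ 2))
        + ‖b - a‖ ^ n / 2 ^ (n-1)
      = (‖a + b‖ ^ n + ‖b - a‖ ^ n) / 2 ^ (n-1) - 2 * ‖a‖ ^ n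
        - ↑n * ‖a‖ ^ (n-2) * ((inner ℝ a b : ℝ) - ‖a‖ ^ 2) := by
    field_simp
    ring
  rw [expand]
  have : (‖a + b‖ ^ n + ‖b - a‖ ^ n) / 2 ^ (n-1) ≤ ‖a‖ ^ n + ‖b‖ ^ n :=
    (div_le_iff₀ hP).mpr (by linarith)
  linarith

private lemma vi_iter {n : ℕ} (hn : 2 ≤ n) :
    ∀ K : ℕ, ∀ a b : E,
      (1 - ((2:ℝ) ^ (n-1))⁻¹ ^ K) / (2 ^ (n-1) - 1) * ‖b - a‖ ^ n ≤ viD n a b := by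
  have hP1 : (1:ℝ) < 2 ^ (n-1) := one_lt_pow₀ (by norm_num) (by omega)
  have hP0 : (0:ℝ) < 2 ^ (n-1) := by positivity
  intro K
  induction K with
  | zero =>
    intro a b
    have := vi_grad hn a b
    simp only [pow_zero, sub_self, zero_div, zero_mul, viD]
    linarith
  | succ K ih =>
    intro a b
    have hstep := vi_step hn a b
    have hm := ih a ((2⁻¹:ℝ) • (a + b))
    have hma : (2⁻¹:ℝ) • (a + b) - a = (2⁻¹:ℝ) • (b - a) := by
      module
    rw [hma] at hm
    have hnorm : ‖(2⁻¹:ℝ) • (b - a)‖ ^ n = ‖b - a‖ ^ n / (2 * 2 ^ (n-1)) := by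
      rw [norm_smul]
      simp only [norm_inv, Real.norm_ofNat, mul_pow, inv_pow]
      rw [show (2:ℝ) ^ n = 2 * 2 ^ (n-1) by rw [← pow_succ']; congr 1; omega]
      ring
    rw [hnorm] at hm
    have hH : (0:ℝ) ≤ ‖b - a‖ ^ n := by positivity
    have hcoef : (1 - ((2:ℝ) ^ (n-1))⁻¹ ^ (K+1)) / (2 ^ (n-1) - 1)
        = 2 * ((1 - ((2:ℝ) ^ (n-1))⁻¹ ^ K) / (2 ^ (n-1) - 1) / (2 * 2 ^ (n-1)))
          + 1 / 2 ^ (n-1) := by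
      have h1 : ((2:ℝ) ^ (n-1)) ≠ 0 := ne_of_gt hP0
      have h2 : ((2:ℝ) ^ (n-1)) - 1 ≠ 0 := by linarith
      field_simp
      generalize (2:ℝ) ^ (n-1) = P at h1 ⊢
      linear_combination (-(1 / P) ^ K) * mul_one_div_cancel h1
    calc (1 - ((2:ℝ) ^ (n-1))⁻¹ ^ (K+1)) / (2 ^ (n-1) - 1) * ‖b - a‖ ^ n
        = 2 * ((1 - ((2:ℝ) ^ (n-1))⁻¹ ^ K) / (2 ^ (n-1) - 1)
            * (‖b - a‖ ^ n / (2 * 2 ^ (n-1)))) + ‖b - a‖ ^ n / 2 ^ (n-1) := by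
          rw [hcoef]; ring
      _ ≤ 2 * viD n a ((2⁻¹:ℝ) • (a + b)) + ‖b - a‖ ^ n / 2 ^ (n-1) := by linarith
      _ ≤ viD n a b := hstep

private lemma vi_main {n : ℕ} (hn : 2 ≤ n) (a b : E) :
    1 / ((2:ℝ) ^ (n-1) - 1) * ‖b - a‖ ^ n ≤ viD n a b := by
  have hP1 : (1:ℝ) < 2 ^ (n-1) := one_lt_pow₀ (by norm_num) (by omega)
  have hr0 : (0:ℝ) ≤ ((2:ℝ) ^ (n-1))⁻¹ := by positivity
  have hr1 : ((2:ℝ) ^ (n-1))⁻¹ < 1 := by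
    rw [inv_lt_one_iff₀]; right; exact hP1
  have hlim : Filter.Tendsto
      (fun K : ℕ => (1 - ((2:ℝ) ^ (n-1))⁻¹ ^ K) / (2 ^ (n-1) - 1) * ‖b - a‖ ^ n)
      Filter.atTop (nhds (1 / ((2:ℝ) ^ (n-1) - 1) * ‖b - a‖ ^ n)) := by
    have h0 : Filter.Tendsto (fun K : ℕ => ((2:ℝ) ^ (n-1))⁻¹ ^ K)
        Filter.atTop (nhds 0) :=
      tendsto_pow_atTop_nhds_zero_of_lt_one hr0 hr1
    have hc : Filter.Tendsto (fun _ : ℕ => (1:ℝ)) Filter.atTop (nhds 1) :=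
      tendsto_const_nhds
    have h1 := ((hc.sub h0).div_const ((2:ℝ) ^ (n-1) - 1)).mul_const (‖b - a‖ ^ n)
    simpa using h1
  exact le_of_tendsto' hlim (fun K => vi_iter hn K a b)

end Aux

theorem vectorial_inequality (n : ℕ) (hn : 2 ≤ n)
    (a b : EuclideanSpace ℝ (Fin n)) :
    ‖b - a‖ ^ n - ‖a‖ ^ n ≥
      (1 / (2 ^ (n - 1) - 1 : ℝ)) * ‖b‖ ^ n
        - n * ‖a‖ ^ (n - 2) * (inner ℝ a b : ℝ) := by
  have h := vi_main hn a (a - b)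
  have h1 : (a - b) - a = -b := by abel
  rw [h1, norm_neg] at h
  have h2 : (inner ℝ a (a - b) : ℝ) = ‖a‖ ^ 2 - (inner ℝ a b : ℝ) := by
    rw [inner_sub_right, real_inner_self_eq_norm_sq]
  have h3 : ‖a - b‖ = ‖b - a‖ := norm_sub_rev a b
  simp only [viD, h2, h3] at h
  linarith
end

section
/- For all vectors a, b in ℝ^n and integer n ≥ 2, |b−a|^n − |a|^n ≥ (1/(λ_n 2^{n−2})) |a|^{n−2}|b|^2 − n|a|^{n−2} a·b, where λ_n := 2^{n−1} − 1. -/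
lemma key_scalar (m : ℕ) {t x : ℝ} (ht : 0 ≤ t) (hx : 0 ≤ x) :
    x ^ m * (t - x) ^ 2 ≤ t ^ (m + 2) - x ^ (m + 2) - ((m : ℝ) + 2) * x ^ (m + 1) * (t - x) := by
  induction m with
  | zero => push_cast; nlinarith [sq_nonneg (t - x)]
  | succ k ih =>
    have hxk : (0:ℝ) ≤ x ^ k := pow_nonneg hx k
    rw [show x ^ (k+2) = x ^ k * x ^ 2 from by ring,
        show x ^ (k+1) = x ^ k * x from by ring] at ih
    have h3 := mul_le_mul_of_nonneg_left ih ht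
    have hk : (0:ℝ) ≤ (k:ℝ) := Nat.cast_nonneg k
    have h1 : 0 ≤ t * (x ^ k * (t - x) ^ 2) := mul_nonneg ht (mul_nonneg hxk (sq_nonneg _))
    have h2 : 0 ≤ x ^ k * x * (t - x) ^ 2 := mul_nonneg (mul_nonneg hxk hx) (sq_nonneg _)
    push_cast
    rw [show t ^ (k+1+2) = t * t ^ (k+2) from by ring,
        show x ^ (k+1+2) = x ^ k * x ^ 3 from by ring,
        show x ^ (k+1+1) = x ^ k * x ^ 2 from by ring,
        show x ^ (k+1) = x ^ k * x from by ring]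
    nlinarith [h3, h1, h2, mul_nonneg hk h2]

theorem vectorial_inequality' (n : ℕ) (hn : 2 ≤ n)
    (a b : EuclideanSpace ℝ (Fin n)) :
    ‖b - a‖ ^ n - ‖a‖ ^ n ≥
      (1 / ((2 ^ (n - 1) - 1 : ℝ) * 2 ^ (n - 2))) * ‖a‖ ^ (n - 2) * ‖b‖ ^ 2
        - n * ‖a‖ ^ (n - 2) * (inner ℝ a b : ℝ) := by
  obtain ⟨m, rfl⟩ : ∃ m, n = m + 2 := ⟨n - 2, by omega⟩
  simp only [show m + 2 - 1 = m + 1 from rfl, show m + 2 - 2 = m from rfl]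
  set t := ‖b - a‖ with htdef
  set x := ‖a‖ with hxdef
  have ht : 0 ≤ t := norm_nonneg _
  have hx : 0 ≤ x := norm_nonneg _
  set p : ℝ := inner ℝ a b with hpdef
  set q : ℝ := ‖b‖ ^ 2 with hqdef
  -- polarization identity
  have hpol : t ^ 2 = q - 2 * p + x ^ 2 := by
    have := @norm_sub_sq_real (EuclideanSpace ℝ (Fin (m + 2))) _ _ b a
    rw [real_inner_comm a b] at this
    exact this
  -- |t - x| ≤ ‖b‖
  have hq1 : (t - x) ^ 2 ≤ q := by
    have h : |t - x| ≤ ‖b‖ := by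
      have := abs_norm_sub_norm_le (b - a) (-a)
      simpa [htdef, hxdef, sub_neg_eq_add, sub_add_cancel] using this
    calc (t - x) ^ 2 = |t - x| ^ 2 := (sq_abs _).symm
      _ ≤ ‖b‖ ^ 2 := by
          apply pow_le_pow_left₀ (abs_nonneg _) h
      _ = q := rfl
  -- c ≤ 1, c > 0
  set c : ℝ := 1 / ((2 ^ (m + 1) - 1 : ℝ) * 2 ^ m) with hcdef
  have hden : (1:ℝ) ≤ (2 ^ (m + 1) - 1 : ℝ) * 2 ^ m := by
    have h1 : (1:ℝ) ≤ 2 ^ (m+1) - 1 := by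
      have : (2:ℝ) ≤ 2 ^ (m+1) := by
        calc (2:ℝ) = 2 ^ 1 := (pow_one 2).symm
        _ ≤ 2 ^ (m+1) := pow_le_pow_right₀ one_le_two (by omega)
      linarith
    have h2 : (1:ℝ) ≤ 2 ^ m := one_le_pow₀ one_le_two
    nlinarith
  have hc1 : c ≤ 1 := by
    rw [hcdef, div_le_one (by linarith)]
    linarith
  have hc0 : 0 < c := by
    rw [hcdef]
    positivity
  have key := key_scalar m ht hx
  have hxm : (0:ℝ) ≤ x ^ m := pow_nonneg hx m
  have hm : (0:ℝ) ≤ (m:ℝ) := Nat.cast_nonneg m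
  rw [ge_iff_le]
  push_cast
  have e1 : 0 ≤ ((m:ℝ) + 2) / 2 - c := by nlinarith
  have e2 : 0 ≤ (((m:ℝ) + 2) / 2 - c) * (x ^ m * (q - (t - x) ^ 2)) :=
    mul_nonneg e1 (mul_nonneg hxm (by linarith))
  have e3 : 0 ≤ (1 - c) * (x ^ m * (t - x) ^ 2) :=
    mul_nonneg (by linarith) (mul_nonneg hxm (sq_nonneg _))
  have hpol2 : x ^ m * t ^ 2 = x ^ m * (q - 2 * p + x ^ 2) := by rw [hpol]
  rw [show x ^ (m+2) = x ^ m * x ^ 2 from by ring,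
      show x ^ (m+1) = x ^ m * x from by ring] at key
  rw [show x ^ (m+2) = x ^ m * x ^ 2 from by ring]
  nlinarith [key, e2, e3, hpol2, mul_nonneg hxm (sq_nonneg (t - x))]
end

section
/- Let g : [0,1] → ℝ be absolutely continuous (or C¹) with g(1) = 0, and let X₁(t) := (1 − log t)^{−1}, X₂ := X₁ ∘ X₁. Then for every r ∈ (0,1], |g(r)| ≤ (−log X₁(r))^{1/2} · (∫_0^1 t |g'(t)|² X₁(t)^{−1} dt)^{1/2}. -/
open MeasureTheory

/-- `X₁ t = (1 - log t)⁻¹`, with `X₁ 0 = 0`. -/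
noncomputable def X₁ (t : ℝ) : ℝ := if t = 0 then 0 else (1 - Real.log t)⁻¹

lemma X₁_measurable : Measurable X₁ :=
  Measurable.ite (measurableSet_eq) measurable_const
    ((measurable_const.sub Real.measurable_log).inv)

theorem onedim_lemma_pointwise (g g' : ℝ → ℝ)
    (hg : ∀ t ∈ Set.Icc (0 : ℝ) 1, HasDerivAt g (g' t) t)
    (hg1 : g 1 = 0) (r : ℝ) (hr : r ∈ Set.Ioc (0 : ℝ) 1) :
    ENNReal.ofReal (|g r|) ≤
      ENNReal.ofReal ((-Real.log (X₁ r)) ^ ((1 : ℝ) / 2)) *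
        (∫⁻ t in Set.Ioo (0 : ℝ) 1,
            ENNReal.ofReal (t * |g' t| ^ 2 * (X₁ t)⁻¹)) ^ ((1 : ℝ) / 2) := by
  obtain ⟨hr0, hr1⟩ := hr
  rcases eq_or_lt_of_le hr1 with rfl | hr1'
  · simp [hg1]
  have hlogr : Real.log r < 0 := Real.log_neg hr0 hr1'
  have h1lr : 1 < 1 - Real.log r := by linarith
  have hX₁r : X₁ r = (1 - Real.log r)⁻¹ := if_neg (ne_of_gt hr0)
  have hL : -Real.log (X₁ r) = Real.log (1 - Real.log r) := by
    rw [hX₁r, Real.log_inv]; ring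
  set L := Real.log (1 - Real.log r) with hLdef
  have hL0 : 0 < L := Real.log_pos h1lr
  by_cases hC : (∫⁻ t in Set.Ioo (0:ℝ) 1,
      ENNReal.ofReal (t * |g' t| ^ 2 * (X₁ t)⁻¹)) = ⊤
  · rw [hC, ENNReal.top_rpow_of_pos (by norm_num), ENNReal.mul_top]
    · exact le_top
    · rw [hL]
      exact (ENNReal.ofReal_pos.mpr (Real.rpow_pos_of_pos hL0 _)).ne'
  -- basic pointwise facts
  have hpos : ∀ t ∈ Set.Icc r 1, 0 < t ∧ 0 < 1 - Real.log t ∧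
      X₁ t = (1 - Real.log t)⁻¹ := by
    intro t ht
    have ht0 : 0 < t := lt_of_lt_of_le hr0 ht.1
    have hlt : Real.log t ≤ 0 := Real.log_nonpos ht0.le ht.2
    exact ⟨ht0, by linarith, if_neg (ne_of_gt ht0)⟩
  -- measurability of g'
  have hg'meas : AEMeasurable g' (volume.restrict (Set.Ioo r 1)) := by
    have h : ∀ᵐ t ∂(volume.restrict (Set.Ioo r 1)), deriv g t = g' t := by
      refine (ae_restrict_iff' measurableSet_Ioo).2 (Filter.Eventually.of_forall ?_)
      intro t ht
      exact (hg t ⟨le_of_lt (lt_trans hr0 ht.1), ht.2.le⟩).deriv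
    exact (measurable_deriv g).aemeasurable.congr h
  set f₁ : ℝ → ENNReal := fun t => ENNReal.ofReal (Real.sqrt (X₁ t / t)) with hf₁def
  set f₂ : ℝ → ENNReal := fun t =>
    ENNReal.ofReal (Real.sqrt (t * |g' t| ^ 2 * (X₁ t)⁻¹)) with hf₂def
  have hf₁m : AEMeasurable f₁ (volume.restrict (Set.Ioo r 1)) :=
    ((Real.continuous_sqrt.measurable.comp
      (X₁_measurable.div measurable_id)).ennreal_ofReal).aemeasurable
  have hf₂m : AEMeasurable f₂ (volume.restrict (Set.Ioo r 1)) := by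
    have h2 : AEMeasurable (fun t => t * |g' t| ^ 2 * (X₁ t)⁻¹)
        (volume.restrict (Set.Ioo r 1)) := by
      have habs : AEMeasurable (fun t => |g' t|) (volume.restrict (Set.Ioo r 1)) :=
        continuous_abs.measurable.comp_aemeasurable hg'meas
      exact (measurable_id.aemeasurable.mul (habs.pow_const 2)).mul
        (X₁_measurable.inv.aemeasurable)
    exact (ENNReal.measurable_ofReal.comp
      Real.continuous_sqrt.measurable).comp_aemeasurable h2
  -- the FTC computation of the weight integral
  have hF : ∀ t ∈ Set.uIcc r 1,
      HasDerivAt (fun s => -Real.log (1 - Real.log s)) (X₁ t / t) t := by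
    intro t ht
    rw [Set.uIcc_of_le hr1] at ht
    obtain ⟨ht0, hlt, hXt⟩ := hpos t ht
    have h1 : HasDerivAt (fun s => 1 - Real.log s) (-t⁻¹) t := by
      simpa using (Real.hasDerivAt_log (ne_of_gt ht0)).const_sub 1
    have h2 : HasDerivAt (fun s => -Real.log (1 - Real.log s)) (-(-t⁻¹ / (1 - Real.log t))) t :=
      (h1.log (ne_of_gt hlt)).neg
    convert h2 using 1
    rw [hXt]
    field_simp
  have hIntA : IntervalIntegrable (fun t => X₁ t / t) volume r 1 := by
    apply ContinuousOn.intervalIntegrable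
    rw [Set.uIcc_of_le hr1]
    have hEq : Set.EqOn (fun t => X₁ t / t) (fun t => (1 - Real.log t)⁻¹ / t)
        (Set.Icc r 1) := fun t ht => by
      simp only []
      rw [(hpos t ht).2.2]
    refine ContinuousOn.congr ?_ hEq
    refine ContinuousOn.div ?_ continuousOn_id ?_
    · refine ContinuousOn.inv₀ (continuousOn_const.sub
        (Real.continuousOn_log.mono ?_)) ?_
      · intro t ht
        exact ne_of_gt (hpos t ht).1
      · intro t ht
        exact ne_of_gt (hpos t ht).2.1
    · intro t ht
      exact ne_of_gt (hpos t ht).1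
  have hA : ∫ t in r..1, X₁ t / t = L := by
    rw [intervalIntegral.integral_eq_sub_of_hasDerivAt hF hIntA]
    simp
    exact hLdef.symm
  have hAlint : ∫⁻ t in Set.Ioo r 1, ENNReal.ofReal (X₁ t / t)
      = ENNReal.ofReal L := by
    rw [← MeasureTheory.ofReal_integral_eq_lintegral_ofReal]
    · congr 1
      rw [← MeasureTheory.integral_Ioc_eq_integral_Ioo,
        ← intervalIntegral.integral_of_le hr1, hA]
    · exact (intervalIntegrable_iff_integrableOn_Ioo_of_le hr1).1 hIntA
    · refine (ae_restrict_iff' measurableSet_Ioo).2 (Filter.Eventually.of_forall ?_)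
      intro t ht
      obtain ⟨ht0, hlt, hXt⟩ := hpos t ⟨ht.1.le, ht.2.le⟩
      show (0:ℝ) ≤ X₁ t / t
      rw [hXt]
      positivity
  -- the Hölder step
  have hmain : (∫⁻ t in Set.Ioo r 1, ENNReal.ofReal |g' t|) ≤
      ENNReal.ofReal L ^ ((1:ℝ)/2) *
        (∫⁻ t in Set.Ioo (0:ℝ) 1,
          ENNReal.ofReal (t * |g' t| ^ 2 * (X₁ t)⁻¹)) ^ ((1:ℝ)/2) := by
    have h22 : (2:ℝ).HolderConjugate 2 := by constructor <;> norm_num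
    have H := ENNReal.lintegral_mul_le_Lp_mul_Lq
      (volume.restrict (Set.Ioo r 1)) h22 hf₁m hf₂m
    have e1 : (∫⁻ t in Set.Ioo r 1, (f₁ * f₂) t)
        = ∫⁻ t in Set.Ioo r 1, ENNReal.ofReal |g' t| := by
      apply setLIntegral_congr_fun measurableSet_Ioo
      intro t ht
      obtain ⟨ht0, hlt, hXt⟩ := hpos t ⟨ht.1.le, ht.2.le⟩
      have hX : 0 < X₁ t := hXt ▸ inv_pos.mpr hlt
      have ha : 0 ≤ X₁ t / t := by positivity
      simp only [hf₁def, hf₂def, Pi.mul_apply]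
      rw [← ENNReal.ofReal_mul (Real.sqrt_nonneg _), ← Real.sqrt_mul ha]
      congr 1
      rw [show X₁ t / t * (t * |g' t| ^ 2 * (X₁ t)⁻¹) = |g' t| ^ 2 by
        field_simp]
      exact Real.sqrt_sq (abs_nonneg _)
    have e2 : (∫⁻ t in Set.Ioo r 1, f₁ t ^ (2:ℝ))
        = ∫⁻ t in Set.Ioo r 1, ENNReal.ofReal (X₁ t / t) := by
      apply setLIntegral_congr_fun measurableSet_Ioo
      intro t ht
      obtain ⟨ht0, hlt, hXt⟩ := hpos t ⟨ht.1.le, ht.2.le⟩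
      have ha : 0 ≤ X₁ t / t := by
        rw [hXt]
        positivity
      simp only [hf₁def]
      rw [ENNReal.ofReal_rpow_of_nonneg (Real.sqrt_nonneg _) (by norm_num : (0:ℝ) ≤ 2)]
      congr 1
      rw [show (2:ℝ) = ((2:ℕ):ℝ) by norm_num, Real.rpow_natCast, Real.sq_sqrt ha]
    have e3 : (∫⁻ t in Set.Ioo r 1, f₂ t ^ (2:ℝ))
        = ∫⁻ t in Set.Ioo r 1, ENNReal.ofReal (t * |g' t| ^ 2 * (X₁ t)⁻¹) := by
      apply setLIntegral_congr_fun measurableSet_Ioo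
      intro t ht
      obtain ⟨ht0, hlt, hXt⟩ := hpos t ⟨ht.1.le, ht.2.le⟩
      have hX : 0 < X₁ t := hXt ▸ inv_pos.mpr hlt
      have hb : 0 ≤ t * |g' t| ^ 2 * (X₁ t)⁻¹ := by positivity
      simp only [hf₂def]
      rw [ENNReal.ofReal_rpow_of_nonneg (Real.sqrt_nonneg _) (by norm_num : (0:ℝ) ≤ 2)]
      congr 1
      rw [show (2:ℝ) = ((2:ℕ):ℝ) by norm_num, Real.rpow_natCast, Real.sq_sqrt hb]
    calc (∫⁻ t in Set.Ioo r 1, ENNReal.ofReal |g' t|)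
        = ∫⁻ t in Set.Ioo r 1, (f₁ * f₂) t := e1.symm
      _ ≤ (∫⁻ t in Set.Ioo r 1, f₁ t ^ (2:ℝ)) ^ ((1:ℝ)/2) *
            (∫⁻ t in Set.Ioo r 1, f₂ t ^ (2:ℝ)) ^ ((1:ℝ)/2) := H
      _ = ENNReal.ofReal L ^ ((1:ℝ)/2) *
            (∫⁻ t in Set.Ioo r 1,
              ENNReal.ofReal (t * |g' t| ^ 2 * (X₁ t)⁻¹)) ^ ((1:ℝ)/2) := by
          rw [e2, e3, hAlint]
      _ ≤ _ := by
          gcongr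
  -- finiteness, hence integrability of g'
  have hfin : (∫⁻ t in Set.Ioo r 1, ENNReal.ofReal |g' t|) < ⊤ := by
    refine lt_of_le_of_lt hmain ?_
    exact ENNReal.mul_lt_top
      (ENNReal.rpow_lt_top_of_nonneg (by norm_num) ENNReal.ofReal_ne_top)
      (ENNReal.rpow_lt_top_of_nonneg (by norm_num) hC)
  have hint : IntegrableOn g' (Set.Ioo r 1) := by
    constructor
    · exact hg'meas.aestronglyMeasurable
    · rw [hasFiniteIntegral_iff_norm]
      simpa [Real.norm_eq_abs] using hfin
  have hII : IntervalIntegrable g' volume r 1 :=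
    (intervalIntegrable_iff_integrableOn_Ioo_of_le hr1).2 hint
  have hFTC : ∫ t in r..1, g' t = g 1 - g r :=
    intervalIntegral.integral_eq_sub_of_hasDerivAt
      (fun t ht => hg t (by
        rw [Set.uIcc_of_le hr1] at ht
        exact ⟨le_trans hr0.le ht.1, ht.2⟩)) hII
  have hgr : |g r| = |∫ t in r..1, g' t| := by
    rw [hFTC, hg1, zero_sub, abs_neg]
  calc ENNReal.ofReal |g r|
      ≤ ENNReal.ofReal (∫ t in r..1, |g' t|) := by
        rw [hgr]
        exact ENNReal.ofReal_le_ofReal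
          (intervalIntegral.abs_integral_le_integral_abs hr1)
    _ = ∫⁻ t in Set.Ioo r 1, ENNReal.ofReal |g' t| := by
        rw [intervalIntegral.integral_of_le hr1,
          MeasureTheory.integral_Ioc_eq_integral_Ioo]
        exact MeasureTheory.ofReal_integral_eq_lintegral_ofReal hint.abs
          (Filter.Eventually.of_forall fun t => abs_nonneg _)
    _ ≤ ENNReal.ofReal L ^ ((1:ℝ)/2) *
          (∫⁻ t in Set.Ioo (0:ℝ) 1,
            ENNReal.ofReal (t * |g' t| ^ 2 * (X₁ t)⁻¹)) ^ ((1:ℝ)/2) := hmain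
    _ = ENNReal.ofReal ((-Real.log (X₁ r)) ^ ((1:ℝ)/2)) *
          (∫⁻ t in Set.Ioo (0:ℝ) 1,
            ENNReal.ofReal (t * |g' t| ^ 2 * (X₁ t)⁻¹)) ^ ((1:ℝ)/2) := by
        rw [hL, ENNReal.ofReal_rpow_of_nonneg hL0.le (by norm_num)]
end

section
/- Let n ≥ 2 and let v ∈ C_c^1(B \ {0}) where B ⊂ ℝ^n is the unit ball. Let v₀(r) be the spherical mean of v over spheres of radius r, viewed as a radial function on B. Then ∫_{S^{n−1}} |∂_r v(rθ)|^n dσ(θ) ≥ (1/λ_n) ∫_{S^{n−1}} |∂_r (v − v₀)(rθ)|^n dσ(θ) for every r ∈ (0,1), where λ_n := 2^{n−1} − 1. -/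
open MeasureTheory Metric Finset Filter


-- AM-GM: n * (a * b^(n-1)) ≤ a^n + (n-1) * b^n for a, b ≥ 0
lemma amgm_aux (n : ℕ) (a b : ℝ) (ha : 0 ≤ a) (hb : 0 ≤ b) :
    (n : ℝ) * (a * b ^ (n - 1)) ≤ a ^ n + ((n : ℝ) - 1) * b ^ n := by
  rcases Nat.eq_zero_or_pos n with h0 | h0
  · subst h0; simp
  obtain ⟨k, rfl⟩ : ∃ k, n = k + 1 := ⟨n - 1, by omega⟩
  have key : a ^ (k+1) + ((k+1 : ℕ) : ℝ) * b ^ (k+1) - b ^ (k+1)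
      - ((k+1 : ℕ) : ℝ) * (a * b ^ k)
      = ∑ i ∈ range (k+1), (a - b) * (a ^ i - b ^ i) * b ^ (k - i) := by
    have h1 : ∑ i ∈ range (k+1), (a - b) * (a ^ i - b ^ i) * b ^ (k - i)
        = (∑ i ∈ range (k+1), a ^ i * b ^ (k - i)) * (a - b)
          - (∑ i ∈ range (k+1), b ^ i * b ^ (k - i)) * (a - b) := by
      rw [← sub_mul, ← Finset.sum_sub_distrib, Finset.sum_mul]
      exact Finset.sum_congr rfl fun i hi => by ring
    have h2 : (∑ i ∈ range (k+1), a ^ i * b ^ (k - i)) * (a - b) = a ^ (k+1) - b ^ (k+1) := by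
      have := geom_sum₂_mul a b (k+1)
      simpa using this
    have h3 : ∀ i ∈ range (k+1), b ^ i * b ^ (k - i) = b ^ k := by
      intro i hi
      rw [← pow_add]
      congr 1
      simp only [Finset.mem_range] at hi
      omega
    rw [h1, h2, Finset.sum_congr rfl h3, Finset.sum_const]
    simp
    ring
  have hnn : 0 ≤ ∑ i ∈ range (k+1), (a - b) * (a ^ i - b ^ i) * b ^ (k - i) := by
    apply Finset.sum_nonneg
    intro i _
    apply mul_nonneg _ (pow_nonneg hb _)
    rcases le_total a b with h | h
    · have h1 : a ^ i ≤ b ^ i := pow_le_pow_left₀ ha h i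
      nlinarith
    · have h1 : b ^ i ≤ a ^ i := pow_le_pow_left₀ hb h i
      nlinarith
  have hk : (k + 1 : ℕ) - 1 = k := rfl
  rw [hk]
  push_cast at key ⊢
  nlinarith [key, hnn]


-- tangent line inequality for |t|^(m+2)
lemma tangent_aux (m : ℕ) (x y : ℝ) :
    |y| ^ (m+2) + ((m:ℝ)+2) * |y| ^ m * y * (x - y) ≤ |x| ^ (m+2) := by
  have h1 : |y| ^ m * y * x ≤ |y| ^ (m+1) * |x| := by
    calc |y| ^ m * y * x = |y| ^ m * (y * x) := by ring
    _ ≤ |y| ^ m * (|y| * |x|) := by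
        apply mul_le_mul_of_nonneg_left _ (pow_nonneg (abs_nonneg y) m)
        calc y * x ≤ |y * x| := le_abs_self _
        _ = |y| * |x| := abs_mul y x
    _ = |y| ^ (m+1) * |x| := by ring
  have h2 : |y| ^ m * y * y = |y| ^ (m+2) := by
    have : y * y = |y| * |y| := by rw [← abs_mul_abs_self]
    calc |y| ^ m * y * y = |y| ^ m * (y * y) := by ring
    _ = |y| ^ m * (|y| * |y|) := by rw [this]
    _ = |y| ^ (m+2) := by ring
  have h3 := amgm_aux (m+2) |x| |y| (abs_nonneg x) (abs_nonneg y)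
  have hk : (m + 2) - 1 = m + 1 := rfl
  rw [hk] at h3
  push_cast at h3
  nlinarith [h1, h2, h3]

-- Clarkson type inequality
lemma clarkson_aux (m : ℕ) (x y : ℝ) :
    |(x+y)/2| ^ (m+2) + |(x-y)/2| ^ (m+2) ≤ (|x| ^ (m+2) + |y| ^ (m+2)) / 2 := by
  set p : ℝ := ((m:ℝ)+2)/2 with hp
  have hp1 : (1:ℝ) ≤ p := by
    rw [hp]; rw [le_div_iff₀ (by norm_num)]; push_cast; linarith
  have habs : ∀ t : ℝ, (t^2) ^ p = |t| ^ (m+2) := by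
    intro t
    rw [← sq_abs t]
    rw [← Real.rpow_natCast |t| 2, ← Real.rpow_mul (abs_nonneg t)]
    have h2 : ((2:ℕ):ℝ) * p = ((m+2 : ℕ) : ℝ) := by rw [hp]; push_cast; ring
    rw [h2, Real.rpow_natCast]
  -- step 1: a^p + b^p ≤ (a+b)^p for a b ≥ 0
  have step1 : ∀ a b : ℝ, 0 ≤ a → 0 ≤ b → a ^ p + b ^ p ≤ (a + b) ^ p := by
    intro a b ha hb
    lift a to NNReal using ha
    lift b to NNReal using hb
    have := NNReal.add_rpow_le_rpow_add a b hp1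
    rw [← NNReal.coe_le_coe] at this
    push_cast at this
    convert this using 2 <;> simp [← NNReal.coe_rpow]
  -- step 2 : convexity
  have step2 : ((x^2 + y^2)/2) ^ p ≤ ((x^2) ^ p + (y^2) ^ p) / 2 := by
    have h := (convexOn_rpow hp1).2 (Set.mem_Ici.2 (sq_nonneg x))
      (Set.mem_Ici.2 (sq_nonneg y)) (le_of_lt one_half_pos) (le_of_lt one_half_pos)
      (by norm_num : (1:ℝ)/2 + 1/2 = 1)
    simp only [smul_eq_mul] at h
    calc ((x^2 + y^2)/2) ^ p = ((1:ℝ)/2 * x^2 + 1/2 * y^2) ^ p := by norm_num; ring_nf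
      _ ≤ 1/2 * (x^2) ^ p + 1/2 * (y^2) ^ p := h
      _ = ((x^2) ^ p + (y^2) ^ p) / 2 := by ring
  have hpar : ((x+y)/2)^2 + ((x-y)/2)^2 = (x^2 + y^2)/2 := by ring
  calc |(x+y)/2| ^ (m+2) + |(x-y)/2| ^ (m+2)
      = (((x+y)/2)^2) ^ p + (((x-y)/2)^2) ^ p := by rw [habs, habs]
    _ ≤ (((x+y)/2)^2 + ((x-y)/2)^2) ^ p := step1 _ _ (sq_nonneg _) (sq_nonneg _)
    _ = ((x^2 + y^2)/2) ^ p := by rw [hpar]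
    _ ≤ ((x^2) ^ p + (y^2) ^ p) / 2 := step2
    _ = (|x| ^ (m+2) + |y| ^ (m+2)) / 2 := by rw [habs, habs]


noncomputable def cseq (m : ℕ) : ℕ → ℝ
  | 0 => 0
  | N+1 => (1 + cseq m N) / 2 ^ (m+1)

lemma bregman_step (m : ℕ) (N : ℕ) : ∀ x y : ℝ,
    cseq m N * |x - y| ^ (m+2) ≤
      |x| ^ (m+2) - |y| ^ (m+2) - ((m:ℝ)+2) * |y| ^ m * y * (x - y) := by
  induction N with
  | zero =>
    intro x y
    simp only [cseq, zero_mul]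
    have := tangent_aux m x y
    linarith
  | succ N ih =>
    intro x y
    have hgap : |(x-y)/2| ^ (m+2) ≤ (|x| ^ (m+2) + |y| ^ (m+2)) / 2 - |(x+y)/2| ^ (m+2) := by
      have := clarkson_aux m x y
      linarith
    have hmid := ih ((x+y)/2) y
    have hmm : (x+y)/2 - y = (x-y)/2 := by ring
    rw [hmm] at hmid
    have habs2 : |(x-y)/2| ^ (m+2) = |x - y| ^ (m+2) / 2 ^ (m+2) := by
      rw [abs_div, abs_two, div_pow]
    rw [habs2] at hgap hmid
    -- now combine: D x y = 2 * Gap + 2 * D((x+y)/2, y)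
    have h2 : (0:ℝ) < 2 ^ (m+2) := by positivity
    have hid : |x| ^ (m+2) - |y| ^ (m+2) - ((m:ℝ)+2) * |y| ^ m * y * (x - y)
        = 2 * ((|x| ^ (m+2) + |y| ^ (m+2)) / 2 - |(x+y)/2| ^ (m+2))
          + 2 * (|(x+y)/2| ^ (m+2) - |y| ^ (m+2) - ((m:ℝ)+2) * |y| ^ m * y * ((x-y)/2)) := by
      ring
    rw [hid]
    have hc : cseq m (N+1) = (1 + cseq m N) / 2 ^ (m+1) := rfl
    rw [hc]
    have hpow : (2:ℝ) ^ (m+2) = 2 * 2 ^ (m+1) := by ring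
    have hne : (2:ℝ) ^ (m+1) ≠ 0 := by positivity
    have goal2 : (1 + cseq m N) / 2 ^ (m+1) * |x - y| ^ (m+2)
        = 2 * (|x - y| ^ (m+2) / 2 ^ (m+2)) + 2 * (cseq m N * (|x - y| ^ (m+2) / 2 ^ (m+2))) := by
      field_simp
      ring
    rw [goal2]
    have hD2 := hmid
    linarith

lemma cseq_closed (m : ℕ) (N : ℕ) :
    cseq m N = (1 - (((2:ℝ) ^ (m+1))⁻¹) ^ N) / (2 ^ (m+1) - 1) := by
  have h1 : (1:ℝ) < 2 ^ (m+1) := by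
    apply one_lt_pow₀ (by norm_num) (by omega)
  have hne : (2:ℝ) ^ (m+1) - 1 ≠ 0 := by linarith
  have hne2 : (2:ℝ) ^ (m+1) ≠ 0 := by positivity
  induction N with
  | zero => simp [cseq]
  | succ N ih =>
    rw [show cseq m (N+1) = (1 + cseq m N) / 2 ^ (m+1) from rfl, ih, pow_succ ((2:ℝ) ^ (m+1))⁻¹ N]
    generalize (2:ℝ) ^ (m+1) = P at *
    generalize P⁻¹ ^ N = Q
    field_simp
    ring

lemma bregman_key (m : ℕ) (x y : ℝ) :
    |y| ^ (m+2) + ((m:ℝ)+2) * |y| ^ m * y * (x - y)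
      + (1 / (2 ^ (m+1) - 1)) * |x - y| ^ (m+2) ≤ |x| ^ (m+2) := by
  have h1 : (1:ℝ) < 2 ^ (m+1) := one_lt_pow₀ (by norm_num) (by omega)
  have hq0 : (0:ℝ) ≤ ((2:ℝ) ^ (m+1))⁻¹ := by positivity
  have hq1 : ((2:ℝ) ^ (m+1))⁻¹ < 1 := by
    rw [inv_lt_one_iff₀]; right; exact h1
  have htend : Tendsto (fun N : ℕ => cseq m N * |x - y| ^ (m+2)) atTop
      (nhds ((1 / (2 ^ (m+1) - 1)) * |x - y| ^ (m+2))) := by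
    have hp : Tendsto (fun N : ℕ => (((2:ℝ) ^ (m+1))⁻¹) ^ N) atTop (nhds 0) :=
      tendsto_pow_atTop_nhds_zero_of_lt_one hq0 hq1
    have : Tendsto (fun N : ℕ => (1 - (((2:ℝ) ^ (m+1))⁻¹) ^ N) / (2 ^ (m+1) - 1)
        * |x - y| ^ (m+2)) atTop
        (nhds ((1 - 0) / (2 ^ (m+1) - 1) * |x - y| ^ (m+2))) := by
      exact (((tendsto_const_nhds.sub hp).div_const _).mul tendsto_const_nhds)
    simp only [sub_zero] at this
    refine Tendsto.congr ?_ this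
    intro N
    rw [cseq_closed]
  have hle : ∀ N, cseq m N * |x - y| ^ (m+2) ≤
      |x| ^ (m+2) - |y| ^ (m+2) - ((m:ℝ)+2) * |y| ^ m * y * (x - y) :=
    fun N => bregman_step m N x y
  have := le_of_tendsto htend (Filter.Eventually.of_forall hle)
  linarith


theorem radial_derivative_estimate (n : ℕ) (hn : 2 ≤ n)
    (v : EuclideanSpace ℝ (Fin n) → ℝ)
    (hv : ContDiff ℝ 1 v) (hvc : HasCompactSupport v)
    (hvs : tsupport v ⊆ Metric.ball (0 : EuclideanSpace ℝ (Fin n)) 1 \ {0})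
    (v₀ : ℝ → ℝ)
    (hv₀ : ∀ s, v₀ s = ⨍ θ : sphere (0 : EuclideanSpace ℝ (Fin n)) 1,
        v (s • (θ : EuclideanSpace ℝ (Fin n))) ∂(volume.toSphere))
    (r : ℝ) (hr : r ∈ Set.Ioo (0 : ℝ) 1) :
    ∫ θ : sphere (0 : EuclideanSpace ℝ (Fin n)) 1,
        |deriv (fun s => v (s • (θ : EuclideanSpace ℝ (Fin n)))) r| ^ n
          ∂(volume.toSphere) ≥
      (1 / (2 ^ (n - 1) - 1 : ℝ)) *
        ∫ θ : sphere (0 : EuclideanSpace ℝ (Fin n)) 1,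
          |deriv (fun s => v (s • (θ : EuclideanSpace ℝ (Fin n))) - v₀ s) r| ^ n
            ∂(volume.toSphere) := by
  obtain ⟨m, rfl⟩ : ∃ m, n = m + 2 := ⟨n - 2, by omega⟩
  set μ : Measure (sphere (0 : EuclideanSpace ℝ (Fin (m+2))) 1) := (volume : Measure (EuclideanSpace ℝ (Fin (m+2)))).toSphere with hμ
  have hvd : Differentiable ℝ v := hv.differentiable one_ne_zero
  -- the pointwise derivative
  have hF : ∀ (s : ℝ) (θ : sphere (0 : EuclideanSpace ℝ (Fin (m+2))) 1),
      HasDerivAt (fun s : ℝ => v (s • (θ : EuclideanSpace ℝ (Fin (m+2))))) (fderiv ℝ v (s • (θ : EuclideanSpace ℝ (Fin (m+2)))) (θ : EuclideanSpace ℝ (Fin (m+2)))) s := by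
    intro s θ
    have h1 : HasDerivAt (fun s : ℝ => s • (θ : EuclideanSpace ℝ (Fin (m+2)))) ((1:ℝ) • (θ : EuclideanSpace ℝ (Fin (m+2)))) s :=
      (hasDerivAt_id s).smul_const (θ : EuclideanSpace ℝ (Fin (m+2)))
    rw [one_smul] at h1
    exact (hvd _).hasFDerivAt.comp_hasDerivAt s h1
  set g : sphere (0 : EuclideanSpace ℝ (Fin (m+2))) 1 → ℝ := fun θ => fderiv ℝ v (r • (θ : EuclideanSpace ℝ (Fin (m+2)))) (θ : EuclideanSpace ℝ (Fin (m+2))) with hg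
  -- continuity of fderiv
  have hfc : Continuous (fderiv ℝ v) := hv.continuous_fderiv one_ne_zero
  have hgc : Continuous g := by
    exact (hfc.comp (continuous_subtype_val.const_smul r)).clm_apply
      continuous_subtype_val
  have hcs : ∀ f : sphere (0 : EuclideanSpace ℝ (Fin (m+2))) 1 → ℝ, Continuous f → Integrable f μ := by
    intro f hf
    exact hf.integrable_of_hasCompactSupport (HasCompactSupport.of_compactSpace f)
  have hgint : Integrable g μ := hcs g hgc
  -- bound on fderiv
  obtain ⟨C, hC⟩ : ∃ C, ∀ x, ‖fderiv ℝ v x‖ ≤ C :=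
    (hvc.fderiv ℝ).exists_bound_of_continuous hfc
  have hnθ : ∀ θ : sphere (0 : EuclideanSpace ℝ (Fin (m+2))) 1, ‖(θ : EuclideanSpace ℝ (Fin (m+2)))‖ = 1 := fun θ => norm_eq_of_mem_sphere θ
  -- derivative under the integral sign
  have key := hasDerivAt_integral_of_dominated_loc_of_deriv_le (μ := μ)
    (F := fun (s : ℝ) (θ : sphere (0 : EuclideanSpace ℝ (Fin (m+2))) 1) => v (s • (θ : EuclideanSpace ℝ (Fin (m+2)))))
    (F' := fun (s : ℝ) (θ : sphere (0 : EuclideanSpace ℝ (Fin (m+2))) 1) => fderiv ℝ v (s • (θ : EuclideanSpace ℝ (Fin (m+2)))) (θ : EuclideanSpace ℝ (Fin (m+2))))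
    (x₀ := r) (bound := fun _ => C) (s := Set.univ) Filter.univ_mem
    (Eventually.of_forall fun s =>
      ((hv.continuous.comp (continuous_subtype_val.const_smul s)).aestronglyMeasurable))
    (hcs _ (hv.continuous.comp (continuous_subtype_val.const_smul r)))
    hgc.aestronglyMeasurable
    (Eventually.of_forall fun θ s _ => by
      calc ‖fderiv ℝ v (s • (θ : EuclideanSpace ℝ (Fin (m+2)))) (θ : EuclideanSpace ℝ (Fin (m+2)))‖ ≤ ‖fderiv ℝ v (s • (θ : EuclideanSpace ℝ (Fin (m+2))))‖ * ‖(θ : EuclideanSpace ℝ (Fin (m+2)))‖ :=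
            ContinuousLinearMap.le_opNorm _ _
        _ = ‖fderiv ℝ v (s • (θ : EuclideanSpace ℝ (Fin (m+2))))‖ := by rw [hnθ θ, mul_one]
        _ ≤ C := hC _)
    (integrable_const C)
    (Eventually.of_forall fun θ s _ => hF s θ)
  obtain ⟨-, hderiv⟩ := key
  -- derivative of v₀
  have hv₀fun : v₀ = fun s => (μ Set.univ).toReal⁻¹ * ∫ θ, v (s • (θ : EuclideanSpace ℝ (Fin (m+2)))) ∂μ := by
    funext s
    rw [hv₀ s, average_eq, smul_eq_mul, measureReal_def]
  set A : ℝ := (μ Set.univ).toReal⁻¹ * ∫ θ, g θ ∂μ with hA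
  have hv₀' : HasDerivAt v₀ A r := by
    rw [hv₀fun]
    exact hderiv.const_mul _
  -- rewrite integrands
  have h1 : (∫ θ : sphere (0 : EuclideanSpace ℝ (Fin (m+2))) 1,
        |deriv (fun s => v (s • (θ : EuclideanSpace ℝ (Fin (m+2))))) r| ^ (m+2) ∂μ)
      = ∫ θ, |g θ| ^ (m+2) ∂μ := by
    apply integral_congr_ae
    filter_upwards with θ
    rw [(hF r θ).deriv]
  have h2 : (∫ θ : sphere (0 : EuclideanSpace ℝ (Fin (m+2))) 1,
        |deriv (fun s => v (s • (θ : EuclideanSpace ℝ (Fin (m+2)))) - v₀ s) r| ^ (m+2) ∂μ)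
      = ∫ θ, |g θ - A| ^ (m+2) ∂μ := by
    apply integral_congr_ae
    filter_upwards with θ
    rw [((hF r θ).fun_sub hv₀').deriv]
  rw [ge_iff_le, h1, h2]
  have hn1 : (m + 2) - 1 = m + 1 := rfl
  rw [hn1]
  -- trivial case: zero measure
  by_cases hμ0 : μ = 0
  · simp [hμ0]
  -- now μ ≠ 0
  have hμfin : (μ Set.univ) ≠ ⊤ := measure_ne_top μ _
  have hμpos : (μ Set.univ).toReal ≠ 0 := by
    simp only [ENNReal.toReal_ne_zero]
    exact ⟨fun h => hμ0 (Measure.measure_univ_eq_zero.mp h), hμfin⟩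
  have hgA : ∫ θ, (g θ - A) ∂μ = 0 := by
    rw [integral_sub hgint (integrable_const A), integral_const, smul_eq_mul, measureReal_def, hA]
    field_simp
    ring
  -- integrability of the pieces
  have hi1 : Integrable (fun θ => |g θ| ^ (m+2)) μ := hcs _ ((hgc.abs).pow _)
  have hi2 : Integrable (fun θ => |g θ - A| ^ (m+2)) μ := hcs _ (((hgc.sub continuous_const).abs).pow _)
  have hi3 : Integrable (fun θ => |A| ^ (m+2) + ((m:ℝ)+2) * |A| ^ m * A * (g θ - A)) μ :=
    (integrable_const _).add ((hgint.sub (integrable_const A)).const_mul _)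
  -- pointwise inequality
  have hpt : ∀ θ, |A| ^ (m+2) + ((m:ℝ)+2) * |A| ^ m * A * (g θ - A)
      ≤ |g θ| ^ (m+2) - (1 / (2 ^ (m+1) - 1)) * |g θ - A| ^ (m+2) := by
    intro θ
    have := bregman_key m (g θ) A
    linarith
  have hi4 : Integrable (fun θ => |g θ| ^ (m+2)
      - (1 / ((2:ℝ) ^ (m+1) - 1)) * |g θ - A| ^ (m+2)) μ := hi1.sub (hi2.const_mul _)
  have hint := integral_mono hi3 hi4 hpt
  rw [integral_sub hi1 (hi2.const_mul _), integral_const_mul] at hint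
  have hlhs : ∫ θ, (|A| ^ (m+2) + ((m:ℝ)+2) * |A| ^ m * A * (g θ - A)) ∂μ
      = (μ Set.univ).toReal * |A| ^ (m+2) := by
    have hi5 : Integrable (fun θ => g θ - A) μ := hgint.sub (integrable_const A)
    have hi6 : Integrable (fun θ => ((m:ℝ)+2) * |A| ^ m * A * (g θ - A)) μ := hi5.const_mul _
    rw [integral_add (integrable_const _) hi6, integral_const, smul_eq_mul, measureReal_def,
      integral_const_mul, hgA, mul_zero, add_zero]
  rw [hlhs] at hint
  have hnn : 0 ≤ (μ Set.univ).toReal * |A| ^ (m+2) := by positivity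
  linarith
end
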